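/- Let A be a finite-dimensional perm algebra and R ∈ A ⊗ A symmetric. Then R satisfies the S-equation if and only if for all b1, b2 ∈ A*: R#(b1)·R#(b2) = R#( κr*(R#(b1))(b2) − κl*(R#(b1))(b2) + κr*(R#(b2))(b1) ), where R# : A* → A is defined by ⟨R#(u1), u2⟩ = ⟨R, u1 ⊗ u2⟩, and ⟨κl*(a)(u), x⟩ = ⟨u, ax⟩, ⟨κr*(a)(u), x⟩ = ⟨u, xa⟩. -/

import Mathlib

open TensorProduct

/-- For `R = Σᵢ aᵢ ⊗ āᵢ ∈ A ⊗ A`, the element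
`P(R) = R₁₃R₁₂ − R₁₃R₂₃ + R₂₃R₁₂ − R₁₂R₂₃ ∈ A ⊗ A ⊗ A`; the S-equation is `P(R) = 0`. -/
noncomputable def sTensor {k A : Type*} [Field k] [AddCommGroup A] [Module k A]
    (mul : A →ₗ[k] A →ₗ[k] A) (R : A ⊗[k] A) : A ⊗[k] (A ⊗[k] A) :=
  let M : A ⊗[k] A →ₗ[k] A := TensorProduct.lift mul
  let X : (A ⊗[k] A) ⊗[k] (A ⊗[k] A) := R ⊗ₜ[k] R
  let Y := (TensorProduct.tensorTensorTensorComm k A A A A) X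
  (TensorProduct.map M LinearMap.id)
      ((TensorProduct.map LinearMap.id (TensorProduct.comm k A A).toLinearMap) Y)
  - (TensorProduct.assoc k A A A) ((TensorProduct.map LinearMap.id M) Y)
  + (TensorProduct.map LinearMap.id (TensorProduct.map M LinearMap.id))
      ((TensorProduct.map LinearMap.id (TensorProduct.assoc k A A A).symm.toLinearMap)
        ((TensorProduct.assoc k A A (A ⊗[k] A))
          ((TensorProduct.tensorTensorTensorComm k A A A A)
            ((TensorProduct.comm k (A ⊗[k] A) (A ⊗[k] A)) X))))
  - (TensorProduct.map LinearMap.id (TensorProduct.map M LinearMap.id))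
      ((TensorProduct.map LinearMap.id (TensorProduct.assoc k A A A).symm.toLinearMap)
        ((TensorProduct.assoc k A A (A ⊗[k] A)) X))

/-- The linear map `R♯ : A* → A` attached to `R ∈ A ⊗ A`, determined by
`⟨R♯(u₁), u₂⟩ = ⟨R, u₁ ⊗ u₂⟩`. -/
noncomputable def rSharp {k A : Type*} [Field k] [AddCommGroup A] [Module k A]
    (R : A ⊗[k] A) : Module.Dual k A → A :=
  fun u => (TensorProduct.lid k A) ((TensorProduct.map u LinearMap.id) R)

/-! Contracting the last two tensor factors against `b₂ ⊗ b₁`, i.e. applying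
`x ⊗ y ⊗ z ↦ b₂(y) b₁(z) x`, sends the four products `R₁₃R₁₂`, `R₁₃R₂₃`, `R₂₃R₁₂`, `R₁₂R₂₃` to
`R♯(b₁)·R♯(b₂)`, `R♯(κr*(R♯(b₂))(b₁))`, `R♯(κl*(R♯(b₁))(b₂))` and `R♯(κr*(R♯(b₁))(b₂))`
respectively; symmetry of `R` is what lets every factor of `R` be read through `R♯`, which pairs
with the first tensor factor. Over a field these contractions jointly detect zero (in a tensor
basis they compute the coordinates), so the S-equation is equivalent to the operator identity.
-/

theorem TensorProduct.induction_on₂ {R M N P Q : Type*} [CommSemiring R] [AddCommMonoid M]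
    [Module R M] [AddCommMonoid N] [Module R N] [AddCommMonoid P] [Module R P] [AddCommMonoid Q]
    [Module R Q] {motive : M ⊗[R] N → P ⊗[R] Q → Prop} (x : M ⊗[R] N) (y : P ⊗[R] Q)
    (zero_left : ∀ y, motive 0 y) (zero_right : ∀ x, motive x 0)
    (tmul : ∀ m n p q, motive (m ⊗ₜ n) (p ⊗ₜ q))
    (add_left : ∀ x₁ x₂ y, motive x₁ y → motive x₂ y → motive (x₁ + x₂) y)
    (add_right : ∀ x y₁ y₂, motive x y₁ → motive x y₂ → motive x (y₁ + y₂)) : motive x y := by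
  induction x using TensorProduct.induction_on with
  | zero => exact zero_left y
  | add x₁ x₂ h₁ h₂ => exact add_left x₁ x₂ y h₁ h₂
  | tmul m n =>
    induction y using TensorProduct.induction_on with
    | zero => exact zero_right _
    | add y₁ y₂ h₁ h₂ => exact add_right _ y₁ y₂ h₁ h₂
    | tmul p q => exact tmul m n p q

section Contraction

variable {k V W X : Type*} [CommSemiring k] [AddCommMonoid V] [Module k V]
  [AddCommMonoid W] [Module k W] [AddCommMonoid X] [Module k X]

noncomputable def contractTail (f : Module.Dual k W) (g : Module.Dual k X) :
    V ⊗[k] (W ⊗[k] X) →ₗ[k] V :=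
  (TensorProduct.rid k V).toLinearMap ∘ₗ (dualDistrib k W X (f ⊗ₜ g)).lTensor V

@[simp] lemma contractTail_tmul (f : Module.Dual k W) (g : Module.Dual k X) (v : V) (w : W)
    (x : X) : contractTail f g (v ⊗ₜ[k] (w ⊗ₜ[k] x)) = (f w * g x) • v := by
  simp [contractTail, dualDistrib_apply]

lemma eq_zero_of_forall_contractTail_eq_zero [Module.Free k V] [Module.Free k W]
    [Module.Free k X] {t : V ⊗[k] (W ⊗[k] X)}
    (h : ∀ (f : Module.Dual k W) (g : Module.Dual k X), contractTail f g t = 0) : t = 0 := by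
  let bV := Module.Free.chooseBasis k V
  let bW := Module.Free.chooseBasis k W
  let bX := Module.Free.chooseBasis k X
  let B := bV.tensorProduct (bW.tensorProduct bX)
  suffices coord : ∀ i j l,
      B.coord (i, j, l) = bV.coord i ∘ₗ contractTail (bW.coord j) (bX.coord l) by
    refine B.ext_elem fun ⟨i, j, l⟩ => ?_
    simpa [h] using LinearMap.congr_fun (coord i j l) t
  intro i j l
  refine TensorProduct.ext_threefold' fun v w x => ?_
  simp [B, mul_comm]

end Contraction

section Terms

variable {k A : Type*} [CommSemiring k] [AddCommMonoid A] [Module k A]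
  (mul : A →ₗ[k] A →ₗ[k] A)

/-- `rIJrKL mul (S ⊗ₜ T)` is the product `S_IJ T_KL` in `A ⊗ A ⊗ A`, in the notation of the
S-equation. -/
noncomputable def r13r12 : (A ⊗[k] A) ⊗[k] (A ⊗[k] A) →ₗ[k] A ⊗[k] (A ⊗[k] A) :=
  TensorProduct.map (TensorProduct.lift mul) LinearMap.id ∘ₗ
    TensorProduct.map LinearMap.id (TensorProduct.comm k A A).toLinearMap ∘ₗ
      (TensorProduct.tensorTensorTensorComm k A A A A).toLinearMap

noncomputable def r13r23 : (A ⊗[k] A) ⊗[k] (A ⊗[k] A) →ₗ[k] A ⊗[k] (A ⊗[k] A) :=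
  (TensorProduct.assoc k A A A).toLinearMap ∘ₗ
    TensorProduct.map LinearMap.id (TensorProduct.lift mul) ∘ₗ
      (TensorProduct.tensorTensorTensorComm k A A A A).toLinearMap

noncomputable def r12r23 : (A ⊗[k] A) ⊗[k] (A ⊗[k] A) →ₗ[k] A ⊗[k] (A ⊗[k] A) :=
  TensorProduct.map LinearMap.id (TensorProduct.map (TensorProduct.lift mul) LinearMap.id) ∘ₗ
    TensorProduct.map LinearMap.id (TensorProduct.assoc k A A A).symm.toLinearMap ∘ₗ
      (TensorProduct.assoc k A A (A ⊗[k] A)).toLinearMap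

noncomputable def r23r12 : (A ⊗[k] A) ⊗[k] (A ⊗[k] A) →ₗ[k] A ⊗[k] (A ⊗[k] A) :=
  r12r23 mul ∘ₗ (TensorProduct.tensorTensorTensorComm k A A A A).toLinearMap ∘ₗ
    (TensorProduct.comm k (A ⊗[k] A) (A ⊗[k] A)).toLinearMap

@[simp] lemma r13r12_tmul (a b c d : A) :
    r13r12 mul ((a ⊗ₜ[k] b) ⊗ₜ[k] (c ⊗ₜ[k] d)) = mul a c ⊗ₜ[k] (d ⊗ₜ[k] b) := by
  simp [r13r12]

@[simp] lemma r13r23_tmul (a b c d : A) :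
    r13r23 mul ((a ⊗ₜ[k] b) ⊗ₜ[k] (c ⊗ₜ[k] d)) = a ⊗ₜ[k] (c ⊗ₜ[k] mul b d) := by
  simp [r13r23]

@[simp] lemma r12r23_tmul (a b c d : A) :
    r12r23 mul ((a ⊗ₜ[k] b) ⊗ₜ[k] (c ⊗ₜ[k] d)) = a ⊗ₜ[k] (mul b c ⊗ₜ[k] d) := by
  simp [r12r23]

@[simp] lemma r23r12_tmul (a b c d : A) :
    r23r12 mul ((a ⊗ₜ[k] b) ⊗ₜ[k] (c ⊗ₜ[k] d)) = c ⊗ₜ[k] (mul a d ⊗ₜ[k] b) := by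
  simp [r23r12]

end Terms

section Sharp

variable {k A : Type*} [Field k] [AddCommGroup A] [Module k A]

@[simp] lemma rSharp_tmul (a b : A) (u : Module.Dual k A) : rSharp (a ⊗ₜ[k] b) u = u a • b := by
  simp [rSharp]

@[simp] lemma rSharp_zero (u : Module.Dual k A) : rSharp (0 : A ⊗[k] A) u = 0 := by
  simp [rSharp]

@[simp] lemma rSharp_add (S T : A ⊗[k] A) (u : Module.Dual k A) :
    rSharp (S + T) u = rSharp S u + rSharp T u := by
  simp [rSharp]

@[simp] lemma rSharp_apply_zero (R : A ⊗[k] A) : rSharp R 0 = 0 := by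
  simp [rSharp]

@[simp] lemma rSharp_apply_add (R : A ⊗[k] A) (u v : Module.Dual k A) :
    rSharp R (u + v) = rSharp R u + rSharp R v := by
  simp [rSharp, ← LinearMap.rTensor_def, LinearMap.rTensor_add]

@[simp] lemma rSharp_apply_sub (R : A ⊗[k] A) (u v : Module.Dual k A) :
    rSharp R (u - v) = rSharp R u - rSharp R v := by
  simp [rSharp, ← LinearMap.rTensor_def, LinearMap.rTensor_sub]

variable (mul : A →ₗ[k] A →ₗ[k] A) (u v : Module.Dual k A)

lemma contractTail_r13r12 (S T : A ⊗[k] A) :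
    contractTail v u (r13r12 mul (TensorProduct.comm k A A S ⊗ₜ TensorProduct.comm k A A T)) =
      mul (rSharp S u) (rSharp T v) := by
  induction S, T using TensorProduct.induction_on₂ <;>
    simp_all [add_tmul, tmul_add, smul_smul, mul_comm]

lemma contractTail_r13r23 (S T : A ⊗[k] A) :
    contractTail v u (r13r23 mul (TensorProduct.comm k A A S ⊗ₜ T)) =
      rSharp S ((mul.flip (rSharp T v)).dualMap u) := by
  induction S, T using TensorProduct.induction_on₂ <;>
    simp_all [add_tmul, tmul_add, LinearMap.dualMap_apply', LinearMap.comp_add]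

lemma contractTail_r23r12 (S T : A ⊗[k] A) :
    contractTail v u (r23r12 mul (TensorProduct.comm k A A S ⊗ₜ TensorProduct.comm k A A T)) =
      rSharp T ((mul (rSharp S u)).dualMap v) := by
  induction S, T using TensorProduct.induction_on₂ <;>
    simp_all [add_tmul, tmul_add, LinearMap.dualMap_apply', LinearMap.comp_add, mul_comm]

lemma contractTail_r12r23 (S T : A ⊗[k] A) :
    contractTail v u (r12r23 mul (TensorProduct.comm k A A T ⊗ₜ TensorProduct.comm k A A S)) =
      rSharp T ((mul.flip (rSharp S u)).dualMap v) := by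
  induction S, T using TensorProduct.induction_on₂ <;>
    simp_all [add_tmul, tmul_add, LinearMap.dualMap_apply', LinearMap.comp_add, mul_comm]

lemma sTensor_eq (R : A ⊗[k] A) :
    sTensor mul R = r13r12 mul (R ⊗ₜ R) - r13r23 mul (R ⊗ₜ R) + r23r12 mul (R ⊗ₜ R) -
      r12r23 mul (R ⊗ₜ R) :=
  rfl

lemma contractTail_sTensor {R : A ⊗[k] A} (hR : TensorProduct.comm k A A R = R) :
    contractTail v u (sTensor mul R) =
      mul (rSharp R u) (rSharp R v) -
        rSharp R ((mul.flip (rSharp R u)).dualMap v - (mul (rSharp R u)).dualMap v +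
          (mul.flip (rSharp R v)).dualMap u) := by
  have h₁ := contractTail_r13r12 mul u v R R
  have h₂ := contractTail_r13r23 mul u v R R
  have h₃ := contractTail_r23r12 mul u v R R
  have h₄ := contractTail_r12r23 mul u v R R
  rw [hR] at h₁ h₂ h₃ h₄
  rw [sTensor_eq, map_sub, map_add, map_sub, h₁, h₂, h₃, h₄, rSharp_apply_add, rSharp_apply_sub]
  abel

end Sharp

theorem sEquation_iff_operator_general {k A : Type*} [Field k] [AddCommGroup A] [Module k A]
    (mul : A →ₗ[k] A →ₗ[k] A)
    (R : A ⊗[k] A)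
    (hsym : (TensorProduct.comm k A A) R = R) :
    sTensor mul R = 0
    ↔
    (∀ b1 b2 : Module.Dual k A,
      mul (rSharp R b1) (rSharp R b2) =
        rSharp R ((mul.flip (rSharp R b1)).dualMap b2 - (mul (rSharp R b1)).dualMap b2 +
          (mul.flip (rSharp R b2)).dualMap b1)) := by
  have contract := fun u v => contractTail_sTensor mul u v hsym
  constructor
  · intro h b1 b2
    rw [← sub_eq_zero, ← contract, h, map_zero]
  · intro h
    exact eq_zero_of_forall_contractTail_eq_zero fun f g => by rw [contract, sub_eq_zero, h]

/-- For a symmetric `R ∈ A ⊗ A` over a finite-dimensional perm algebra `A`, `R` satisfies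
the S-equation if and only if for all `b₁, b₂ ∈ A*`:
`R♯(b₁)·R♯(b₂) = R♯(κr*(R♯(b₁))(b₂) − κl*(R♯(b₁))(b₂) + κr*(R♯(b₂))(b₁))`,
where `κl*(a) = (mul a)*` and `κr*(a) = (mul.flip a)*` are the dual maps of left and right
multiplication. -/
theorem sEquation_iff_operator {k A : Type*} [Field k] [AddCommGroup A] [Module k A]
    [FiniteDimensional k A]
    (mul : A →ₗ[k] A →ₗ[k] A)
    (hp1 : ∀ x y z, mul (mul x y) z = mul x (mul y z))
    (hp2 : ∀ x y z, mul x (mul y z) = mul x (mul z y))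
    (R : A ⊗[k] A)
    (hsym : (TensorProduct.comm k A A) R = R) :
    sTensor mul R = 0
    ↔
    (∀ b1 b2 : Module.Dual k A,
      mul (rSharp R b1) (rSharp R b2) =
        rSharp R ((mul.flip (rSharp R b1)).dualMap b2 - (mul (rSharp R b1)).dualMap b2 +
          (mul.flip (rSharp R b2)).dualMap b1)) :=
  sEquation_iff_operator_general mul R hsym
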